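/- arXiv:2109.07530 — 2 statements merged into one kernel-verified Lean document; each statement's English description precedes it below -/
import Mathlib

section
/- Let N > 1, κ ∈ {−1, 0, 1}, K = κ(N−1), λ ∈ (0,1], and L > 0, with L < π in the case κ = 1. Then for every δ' > 0 there exists v̄ > 0, depending only on N, λ, L, δ', such that for every D ∈ [λL, L] and every a ∈ (0, D), if v_{K,N,D}(a) < v̄ then a < δ'. In other words, the value a tends to 0 uniformly in D ∈ [λL, L] as the volume v_{K,N,D}(a) tends to 0. -/
open MeasureTheory Filter Set

/-- The function `s_κ`. -/
noncomputable def sK (κ θ : ℝ) : ℝ :=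
  if 0 < κ then Real.sin (Real.sqrt κ * θ) / Real.sqrt κ
  else if κ = 0 then θ
  else Real.sinh (Real.sqrt (-κ) * θ) / Real.sqrt (-κ)

/-- `k_D = ∫₀^D s_κ(t)^(N-1) dt`. -/
noncomputable def kD (κ N D : ℝ) : ℝ := ∫ t in (0:ℝ)..D, sK κ t ^ (N - 1)

/-- The function `f_{K,N,D}` (with `K = κ(N-1)`). -/
noncomputable def fKND (κ N D x : ℝ) : ℝ :=
  ((∫ y in (0:ℝ)..x, (sK κ (D - y) / sK κ (D - x)) ^ (N - 1)) +
    ∫ y in x..D, (sK κ y / sK κ x) ^ (N - 1))⁻¹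

/-- The model density `h^a_{K,N,D}` (with `K = κ(N-1)`). -/
noncomputable def hKND (κ N D a x : ℝ) : ℝ :=
  if x ≤ a then fKND κ N D a * (sK κ (D - x) / sK κ (D - a)) ^ (N - 1)
  else fKND κ N D a * (sK κ x / sK κ a) ^ (N - 1)

/-- The volume map `v_{K,N,D}(a) = ∫₀^a h^a_{K,N,D}`. -/
noncomputable def vKND (κ N D a : ℝ) : ℝ := ∫ x in (0:ℝ)..a, hKND κ N D a x

/-- `ω_N = π^(N/2)/Γ(N/2+1)`. -/
noncomputable def omegaN (N : ℝ) : ℝ := Real.pi ^ (N / 2) / Real.Gamma (N / 2 + 1)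

/-- `Vol_{K,N}(r) = N ω_N ∫₀^r s_κ(t)^(N-1) dt` (with `K = κ(N-1)`). -/
noncomputable def VolKN (κ N r : ℝ) : ℝ := N * omegaN N * ∫ t in (0:ℝ)..r, sK κ t ^ (N - 1)

/-- The coefficient `σ^{(s)}_{K,N-1}(θ)`, valued in `[0,∞]`. -/
noncomputable def sigmaE (K N s θ : ℝ) : ENNReal :=
  if (N - 1) * Real.pi ^ 2 ≤ K * θ ^ 2 then ⊤
  else ENNReal.ofReal (sK (K / (N - 1)) (s * θ) / sK (K / (N - 1)) θ)

/-- A nonnegative continuous function `h` on the interval `I` is an `MCP(K,N)` density. -/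
def IsMCPDensity (K N : ℝ) (I : Set ℝ) (h : ℝ → ℝ) : Prop :=
  ContinuousOn h I ∧ (∀ x ∈ I, 0 ≤ h x) ∧
    ∀ x₀ ∈ I, ∀ x₁ ∈ I, ∀ t ∈ Set.Icc (0:ℝ) 1,
      sigmaE K N (1 - t) |x₁ - x₀| ^ (N - 1) * ENNReal.ofReal (h x₀) ≤
        ENNReal.ofReal (h (t * x₁ + (1 - t) * x₀))

/-- The measure `h·𝓛¹` restricted to `[0,D]`. -/
noncomputable def mcMeasure (D : ℝ) (h : ℝ → ℝ) : Measure ℝ :=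
  (volume.restrict (Set.Icc 0 D)).withDensity fun x => ENNReal.ofReal (h x)

/-- The outer Minkowski content `μ⁺(E) = liminf_{ρ→0⁺} (μ(E^ρ) - μ(E))/ρ`. -/
noncomputable def minkContent (μ : Measure ℝ) (E : Set ℝ) : ℝ :=
  Filter.liminf (fun ρ : ℝ => ((μ (Metric.thickening ρ E)).toReal - (μ E).toReal) / ρ)
    (nhdsWithin 0 (Set.Ioi 0))

lemma frac_mono {A B A0 B0 : ℝ} (hA0 : 0 < A0) (hB0 : 0 < B0) (hA : A0 ≤ A)
    (hB : 0 ≤ B) (hBB : B ≤ B0) : A0 / (A0 + B0) ≤ (A + B)⁻¹ * A := by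
  have hApos : 0 < A := lt_of_lt_of_le hA0 hA
  rw [inv_mul_eq_div, div_le_div_iff₀ (by linarith) (by linarith)]
  nlinarith [mul_le_mul hA hBB hB hApos.le]

set_option maxHeartbeats 2000000 in
lemma key (κ N lam L : ℝ) (hN : 1 < N) (hL : 0 < L)
    (hlam : lam ∈ Set.Ioc (0:ℝ) 1)
    (hcont : Continuous (sK κ))
    (hpos : ∀ t, 0 < t → t ≤ L → 0 < sK κ t)
    (hnn : ∀ t, 0 ≤ t → t ≤ L → 0 ≤ sK κ t) :
    ∀ δ' > 0, ∃ vbar > 0, ∀ D ∈ Set.Icc (lam * L) L, ∀ a ∈ Set.Ioo (0:ℝ) D,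
      vKND κ N D a < vbar → a < δ' := by
  intro δ' hδ'
  obtain ⟨hlam0, hlam1⟩ := hlam
  set δ : ℝ := min δ' (lam * L / 2) with hδdef
  have hδpos : 0 < δ := lt_min hδ' (by positivity)
  have hδhalf : δ ≤ lam * L / 2 := min_le_right _ _
  have hδL : δ ≤ L := hδhalf.trans (by nlinarith)
  -- exponent
  have hNe : (0:ℝ) ≤ N - 1 := by linarith
  have hgc : Continuous (fun x : ℝ => x ^ (N - 1)) := Real.continuous_rpow_const hNe
  have hg : Continuous (fun t : ℝ => sK κ t ^ (N - 1)) := hgc.comp hcont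
  -- max of sK on [0,L]
  obtain ⟨t₁, ht₁, hmax⟩ := isCompact_Icc.exists_isMaxOn (s := Icc (0:ℝ) L)
    ⟨L, hL.le, le_rfl⟩ hcont.continuousOn
  set S : ℝ := sK κ t₁ with hSdef
  have hSmax : ∀ t ∈ Icc (0:ℝ) L, sK κ t ≤ S := fun t ht => hmax ht
  have hSpos : 0 < S := lt_of_lt_of_le (hpos L hL le_rfl) (hSmax L ⟨hL.le, le_rfl⟩)
  -- min of sK on [δ, L]
  obtain ⟨t₀, ht₀, hmin⟩ := isCompact_Icc.exists_isMinOn (s := Icc δ L)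
    ⟨δ, le_rfl, hδL⟩ hcont.continuousOn
  set m : ℝ := sK κ t₀ with hmdef
  have hmmin : ∀ t ∈ Icc δ L, m ≤ sK κ t := fun t ht => hmin ht
  have hmpos : 0 < m := hpos t₀ (lt_of_lt_of_le hδpos ht₀.1) ht₀.2
  set E : ℝ := S ^ (N - 1) with hEdef
  set M : ℝ := m ^ (N - 1) with hMdef
  have hEpos : 0 < E := Real.rpow_pos_of_pos hSpos _
  have hMpos : 0 < M := Real.rpow_pos_of_pos hmpos _
  set A0 : ℝ := δ * M / E with hA0def
  set B0 : ℝ := L * E / M with hB0def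
  have hA0pos : 0 < A0 := by positivity
  have hB0pos : 0 < B0 := by positivity
  refine ⟨A0 / (A0 + B0), by positivity, ?_⟩
  rintro D ⟨hD1, hD2⟩ a ⟨ha0, haD⟩ hv
  by_contra hcon
  push_neg at hcon
  have hδa : δ ≤ a := (min_le_left _ _).trans hcon
  have haL : a ≤ L := (le_of_lt haD).trans hD2
  have hDpos : 0 < D := lt_trans ha0 haD
  have hDδ : δ ≤ D - δ := by nlinarith
  -- abbreviations for the two integrals
  set A : ℝ := ∫ y in (0:ℝ)..a, (sK κ (D - y) / sK κ (D - a)) ^ (N - 1) with hAdef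
  set B : ℝ := ∫ y in a..D, (sK κ y / sK κ a) ^ (N - 1) with hBdef
  -- c₁ and c₂
  have hDa0 : 0 < D - a := by linarith
  have hDaL : D - a ≤ L := by linarith
  have hsDa : 0 < sK κ (D - a) := hpos _ hDa0 hDaL
  set c₁ : ℝ := sK κ (D - a) ^ (N - 1) with hc₁def
  have hc₁pos : 0 < c₁ := Real.rpow_pos_of_pos hsDa _
  have hc₁E : c₁ ≤ E := Real.rpow_le_rpow hsDa.le (hSmax _ ⟨hDa0.le, hDaL⟩) hNe
  have hsa : 0 < sK κ a := hpos a ha0 haL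
  set c₂ : ℝ := sK κ a ^ (N - 1) with hc₂def
  have hMc₂ : M ≤ c₂ := Real.rpow_le_rpow hmpos.le (hmmin a ⟨hδa, haL⟩) hNe
  have hc₂pos : 0 < c₂ := lt_of_lt_of_le hMpos hMc₂
  -- rewrite A
  have hgi1 : Continuous (fun y : ℝ => sK κ (D - y) ^ (N - 1)) :=
    hg.comp (continuous_const.sub continuous_id)
  have hAeq : A = (∫ y in (0:ℝ)..a, sK κ (D - y) ^ (N - 1)) / c₁ := by
    rw [hAdef, ← intervalIntegral.integral_div]
    apply intervalIntegral.integral_congr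
    intro y hy
    rw [uIcc_of_le ha0.le] at hy
    exact Real.div_rpow (hnn _ (by linarith [hy.2, haD]) (by linarith [hy.1, hD2])) hsDa.le _
  -- lower bound for the numerator of A
  have hnumA : δ * M ≤ ∫ y in (0:ℝ)..a, sK κ (D - y) ^ (N - 1) := by
    have hsplit : (∫ y in (0:ℝ)..δ, sK κ (D - y) ^ (N - 1)) +
        (∫ y in δ..a, sK κ (D - y) ^ (N - 1)) = ∫ y in (0:ℝ)..a, sK κ (D - y) ^ (N - 1) :=
      intervalIntegral.integral_add_adjacent_intervals
        (hgi1.intervalIntegrable _ _) (hgi1.intervalIntegrable _ _)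
    have h1 : δ * M ≤ ∫ y in (0:ℝ)..δ, sK κ (D - y) ^ (N - 1) := by
      have := intervalIntegral.integral_mono_on (f := fun _ : ℝ => M)
        (g := fun y : ℝ => sK κ (D - y) ^ (N - 1)) (μ := volume) hδpos.le
        (intervalIntegrable_const) (hgi1.intervalIntegrable _ _)
        (fun y hy => Real.rpow_le_rpow hmpos.le
          (hmmin _ ⟨by linarith [hy.2, hDδ], by linarith [hy.1, hD2]⟩) hNe)
      simpa using this
    have h2 : 0 ≤ ∫ y in δ..a, sK κ (D - y) ^ (N - 1) :=
      intervalIntegral.integral_nonneg hδa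
        (fun y hy => Real.rpow_nonneg
          (hnn _ (by linarith [hy.2, haD]) (by linarith [hy.1, hD2, hδpos])) _)
    linarith [hsplit]
  have hnumAnn : 0 ≤ ∫ y in (0:ℝ)..a, sK κ (D - y) ^ (N - 1) :=
    hnumA.trans' (mul_nonneg hδpos.le hMpos.le)
  have hA0A : A0 ≤ A := by
    rw [hAeq, hA0def, div_le_div_iff₀ hEpos hc₁pos]
    exact le_trans (mul_le_mul_of_nonneg_right hnumA hc₁pos.le)
      (mul_le_mul_of_nonneg_left hc₁E hnumAnn)
  have hApos : 0 < A := lt_of_lt_of_le hA0pos hA0A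
  -- rewrite B
  have hBeq : B = (∫ y in a..D, sK κ y ^ (N - 1)) / c₂ := by
    rw [hBdef, ← intervalIntegral.integral_div]
    apply intervalIntegral.integral_congr
    intro y hy
    rw [uIcc_of_le haD.le] at hy
    exact Real.div_rpow (hnn _ (by linarith [hy.1, ha0]) (by linarith [hy.2, hD2])) hsa.le _
  have hnumB : (∫ y in a..D, sK κ y ^ (N - 1)) ≤ L * E := by
    have h1 : (∫ y in a..D, sK κ y ^ (N - 1)) ≤ ∫ _y in a..D, E := by
      apply intervalIntegral.integral_mono_on haD.le (hg.intervalIntegrable _ _)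
        intervalIntegrable_const
      intro y hy
      exact Real.rpow_le_rpow (hnn _ (by linarith [hy.1, ha0]) (by linarith [hy.2, hD2]))
        (hSmax _ ⟨by linarith [hy.1, ha0], by linarith [hy.2, hD2]⟩) hNe
    have h2 : (∫ _y in a..D, E) = (D - a) * E := by simp [mul_comm]
    have h3 : (D - a) * E ≤ L * E :=
      mul_le_mul_of_nonneg_right (by linarith) hEpos.le
    exact h1.trans (le_of_eq h2 |>.trans h3)
  have hnumBnn : 0 ≤ ∫ y in a..D, sK κ y ^ (N - 1) :=
    intervalIntegral.integral_nonneg haD.le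
      (fun y hy => Real.rpow_nonneg (hnn _ (by linarith [hy.1, ha0]) (by linarith [hy.2, hD2])) _)
  have hBB0 : B ≤ B0 := by
    rw [hBeq, hB0def]
    rw [div_le_div_iff₀ hc₂pos hMpos]
    exact le_trans (mul_le_mul_of_nonneg_right hnumB hMpos.le)
      (mul_le_mul_of_nonneg_left hMc₂ (mul_nonneg hL.le hEpos.le))
  have hBnn : 0 ≤ B := by
    rw [hBeq]; positivity
  -- compute vKND
  have hveq : vKND κ N D a = (A + B)⁻¹ * A := by
    have : vKND κ N D a = ∫ x in (0:ℝ)..a,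
        fKND κ N D a * (sK κ (D - x) / sK κ (D - a)) ^ (N - 1) := by
      apply intervalIntegral.integral_congr
      intro x hx
      rw [uIcc_of_le ha0.le] at hx
      exact if_pos hx.2
    rw [this, intervalIntegral.integral_const_mul]
    rfl
  have hfinal : A0 / (A0 + B0) ≤ (A + B)⁻¹ * A :=
    frac_mono hA0pos hB0pos hA0A hBnn hBB0
  rw [hveq] at hv
  exact absurd hv (not_lt.mpr hfinal)

lemma sK_neg_one : sK (-1) = Real.sinh := by
  funext θ; norm_num [sK, Real.sqrt_one]

lemma sK_zero : sK 0 = id := by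
  funext θ; norm_num [sK]

lemma sK_one : sK 1 = Real.sin := by
  funext θ; norm_num [sK, Real.sqrt_one]

/-- `a → 0` uniformly in `D ∈ [λL, L]` as `v_{K,N,D}(a) → 0`. -/
theorem stmt2 (N κ lam L : ℝ) (hN : 1 < N) (hκ : κ = -1 ∨ κ = 0 ∨ κ = 1)
    (hlam : lam ∈ Set.Ioc (0:ℝ) 1) (hL : 0 < L) (hLpi : κ = 1 → L < Real.pi) :
    ∀ δ' > 0, ∃ vbar > 0, ∀ D ∈ Set.Icc (lam * L) L, ∀ a ∈ Set.Ioo (0:ℝ) D,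
      vKND κ N D a < vbar → a < δ' := by
  rcases hκ with h | h | h <;> subst h
  · exact key _ N lam L hN hL hlam (sK_neg_one ▸ Real.continuous_sinh)
      (fun t ht _ => by rw [sK_neg_one]; exact Real.sinh_pos_iff.mpr ht)
      (fun t ht _ => by rw [sK_neg_one]; exact Real.sinh_nonneg_iff.mpr ht)
  · exact key _ N lam L hN hL hlam (sK_zero ▸ continuous_id)
      (fun t ht _ => by rw [sK_zero]; exact ht)
      (fun t ht _ => by rw [sK_zero]; exact ht)
  · have hπ : L < Real.pi := hLpi rfl
    exact key _ N lam L hN hL hlam (sK_one ▸ Real.continuous_sin)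
      (fun t ht htL => by
        rw [sK_one]; exact Real.sin_pos_of_pos_of_lt_pi ht (lt_of_le_of_lt htL hπ))
      (fun t ht htL => by
        rw [sK_one]; exact Real.sin_nonneg_of_nonneg_of_le_pi ht (htL.trans hπ.le))
end

section
/- Let N > 1, κ ∈ {−1, 0, 1}, K = κ(N−1), λ ∈ (0,1], and L > 0, with L < π in the case κ = 1. Then for every ε > 0 there exists v̄ > 0, depending only on N, λ, L, ε, such that for every D ∈ [λL, L] and every a ∈ (0, D), if v := v_{K,N,D}(a) < v̄ then |f_{K,N,D}(a)·k_D^{1/N} / v^{(N−1)/N} − 1| ≤ ε. In other words, the one-dimensional MCP(K,N) isoperimetric profile satisfies Ĩ_{K,N,D}(v) = f_{K,N,D}(a_{K,N,D}(v)) = k_D^{−1/N} v^{(N−1)/N} (1 + o(1)) as v → 0⁺, uniformly in D ∈ [λL, L]. -/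
open MeasureTheory Filter Set

open Topology

/-!
Put `A = ∫₀^a (s_κ(D-y)/s_κ(D-a))^(N-1) dy`. Since
`∫_a^D (s_κ(y)/s_κ(a))^(N-1) dy = (k_D - k_a)/s_κ(a)^(N-1)`, we have
`f = (A + (k_D - k_a)/s_κ(a)^(N-1))⁻¹` and `v = f A`, so the ratio to be estimated equals
`(A^N/k_D + (A/s_κ(a))^(N-1) (1 - k_a/k_D))^(-1/N)`. As `a → 0`, the integrand of `A` is uniformly
close to `1`, so `A/a → 1`; also `s_κ(a)/a → 1` and `k_a → 0`, while `k_D ≥ k_{λL} > 0`. Hence the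
ratio tends to `1` uniformly in `D ∈ [λL, L]`. Finally `v` is bounded below as long as `a` is, so
small `v` forces small `a`.
-/

lemma sK_zero_right (κ : ℝ) : sK κ 0 = 0 := by
  simp [sK]

lemma continuous_sK (κ : ℝ) : Continuous (sK κ) := by
  unfold sK
  exact continuous_if_const _ (fun _ => by fun_prop)
    fun _ => continuous_if_const _ (fun _ => continuous_id) fun _ => by fun_prop

lemma hasDerivAt_sK_zero (κ : ℝ) : HasDerivAt (sK κ) 1 0 := by
  rcases lt_trichotomy κ 0 with hκ | rfl | hκ
  · have hc : Real.sqrt (-κ) ≠ 0 := (Real.sqrt_pos.2 (neg_pos.2 hκ)).ne'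
    have h := (((hasDerivAt_id (0:ℝ)).const_mul (Real.sqrt (-κ))).sinh).div_const (Real.sqrt (-κ))
    have hs : sK κ = fun θ => Real.sinh (Real.sqrt (-κ) * θ) / Real.sqrt (-κ) := by
      funext θ; simp [sK, hκ.not_gt, hκ.ne]
    rw [hs]
    exact h.congr_deriv (by simp [hc])
  · exact (hasDerivAt_id 0).congr_of_eventuallyEq (Eventually.of_forall fun θ => by simp [sK])
  · have hc : Real.sqrt κ ≠ 0 := (Real.sqrt_pos.2 hκ).ne'
    have h := (((hasDerivAt_id (0:ℝ)).const_mul (Real.sqrt κ)).sin).div_const (Real.sqrt κ)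
    have hs : sK κ = fun θ => Real.sin (Real.sqrt κ * θ) / Real.sqrt κ := by
      funext θ; simp [sK, hκ]
    rw [hs]
    exact h.congr_deriv (by simp [hc])

lemma tendsto_sK_div_self (κ : ℝ) : Tendsto (fun t => sK κ t / t) (𝓝[>] 0) (𝓝 1) := by
  simpa [sK_zero_right, div_eq_inv_mul] using (hasDerivAt_sK_zero κ).tendsto_slope_zero_right

lemma sK_pos {κ t : ℝ} (ht : 0 < t) (hκt : 0 < κ → Real.sqrt κ * t < Real.pi) : 0 < sK κ t := by
  unfold sK
  split_ifs with h₁ h₂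
  · exact div_pos (Real.sin_pos_of_pos_of_lt_pi (by positivity) (hκt h₁)) (Real.sqrt_pos.2 h₁)
  · exact ht
  · have hκ : 0 < -κ := neg_pos.2 (lt_of_le_of_ne (not_lt.1 h₁) h₂)
    exact div_pos (Real.sinh_pos_iff.2 (by positivity)) (Real.sqrt_pos.2 hκ)

lemma Filter.Tendsto.div_of_eventually_ge {ι : Type*} {F : Filter ι} {g k : ι → ℝ} {c : ℝ}
    (hg : Tendsto g F (𝓝 0)) (hc : 0 < c) (hk : ∀ᶠ i in F, c ≤ k i) :
    Tendsto (fun i => g i / k i) F (𝓝 0) := by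
  refine squeeze_zero_norm' ?_ (by simpa using hg.norm.div_const c)
  filter_upwards [hk] with i hi
  rw [norm_div, Real.norm_eq_abs (k i), abs_of_pos (hc.trans_le hi)]
  exact div_le_div_of_nonneg_left (norm_nonneg _) hc hi

lemma tendsto_integral_div_of_forall_abs_sub_le {ι : Type*} {F : Filter ι} {g : ι → ℝ → ℝ}
    {a : ι → ℝ} {c : ℝ} (ha : ∀ᶠ i in F, 0 < a i)
    (hg_int : ∀ᶠ i in F, IntervalIntegrable (g i) volume 0 (a i))
    (hg : ∀ ε > 0, ∀ᶠ i in F, ∀ y ∈ Icc 0 (a i), |g i y - c| ≤ ε) :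
    Tendsto (fun i => (∫ y in (0:ℝ)..a i, g i y) / a i) F (𝓝 c) := by
  rw [Metric.tendsto_nhds]
  intro ε hε
  filter_upwards [ha, hg_int, hg (ε / 2) (half_pos hε)] with i hai hint hgi
  have hsub : (∫ y in (0:ℝ)..a i, g i y) / a i - c = (∫ y in (0:ℝ)..a i, (g i y - c)) / a i := by
    rw [intervalIntegral.integral_sub hint intervalIntegrable_const,
      intervalIntegral.integral_const]
    field_simp
    simp
  have hbound : ‖∫ y in (0:ℝ)..a i, (g i y - c)‖ ≤ ε / 2 * |a i - 0| :=
    intervalIntegral.norm_integral_le_of_norm_le_const fun y hy => by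
      rw [uIoc_of_le hai.le] at hy
      exact hgi y (Ioc_subset_Icc_self hy)
  rw [Real.dist_eq, hsub, abs_div, abs_of_pos hai, div_lt_iff₀ hai]
  rw [Real.norm_eq_abs, sub_zero, abs_of_pos hai] at hbound
  linarith [mul_pos hε hai]

lemma inv_mul_rpow_div_inv_mul_rpow {A B k N : ℝ} (hA : 0 < A) (hB : 0 ≤ B) (hk : 0 ≤ k)
    (hN : N ≠ 0) :
    (A + B)⁻¹ * k ^ (1 / N) / ((A + B)⁻¹ * A) ^ ((N - 1) / N) =
      (k / (A ^ (N - 1) * (A + B))) ^ (1 / N) := by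
  have hC : 0 < A + B := by positivity
  have hsplit : (A + B) ^ ((N - 1) / N) * (A + B) ^ (1 / N) = A + B := by
    rw [← Real.rpow_add hC, ← add_div, sub_add_cancel, div_self hN, Real.rpow_one]
  rw [Real.div_rpow hk (by positivity), Real.mul_rpow (by positivity) hC.le, ← Real.rpow_mul hA.le,
    Real.mul_rpow (inv_nonneg.2 hC.le) hA.le, Real.inv_rpow hC.le, mul_one_div]
  have : 0 < A ^ ((N - 1) / N) := by positivity
  have : 0 < (A + B) ^ (1 / N) := by positivity
  have : 0 < (A + B) ^ ((N - 1) / N) := by positivity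
  field_simp
  rw [mul_assoc, hsplit, mul_comm]

noncomputable def leftIntegral (κ N D a : ℝ) : ℝ :=
  ∫ y in (0:ℝ)..a, (sK κ (D - y) / sK κ (D - a)) ^ (N - 1)

lemma vKND_eq {κ N D a : ℝ} (ha : 0 ≤ a) :
    vKND κ N D a = fKND κ N D a * leftIntegral κ N D a := by
  rw [vKND, leftIntegral, ← intervalIntegral.integral_const_mul]
  refine intervalIntegral.integral_congr fun x hx => ?_
  rw [uIcc_of_le ha] at hx
  rw [hKND, if_pos hx.2]

section Model

variable {κ N L : ℝ}

lemma continuous_sK_rpow (hN : 1 ≤ N) : Continuous fun t => sK κ t ^ (N - 1) :=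
  (Real.continuous_rpow_const (by linarith)).comp (continuous_sK κ)

lemma continuous_kD (hN : 1 ≤ N) : Continuous (kD κ N) :=
  intervalIntegral.continuous_primitive
    (fun _ _ => (continuous_sK_rpow hN).intervalIntegrable _ _) 0

lemma continuous_leftIntegrand (hN : 1 ≤ N) (D a : ℝ) :
    Continuous fun y => (sK κ (D - y) / sK κ (D - a)) ^ (N - 1) :=
  (Real.continuous_rpow_const (by linarith)).comp
    (((continuous_sK κ).comp (continuous_const.sub continuous_id)).div_const _)

variable (hpos : ∀ t ∈ Ioc 0 L, 0 < sK κ t)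
include hpos

lemma kD_mono (hN : 1 ≤ N) {D₁ D₂ : ℝ} (hD₁ : 0 ≤ D₁) (hD₁₂ : D₁ ≤ D₂) (hD₂ : D₂ ≤ L) :
    kD κ N D₁ ≤ kD κ N D₂ := by
  refine intervalIntegral.integral_mono_interval le_rfl hD₁ hD₁₂ ?_
    ((continuous_sK_rpow hN).intervalIntegrable _ _)
  refine (ae_restrict_iff' measurableSet_Ioc).2 (Eventually.of_forall fun t ht => ?_)
  exact Real.rpow_nonneg (hpos t ⟨ht.1, ht.2.trans hD₂⟩).le _

lemma kD_pos (hN : 1 ≤ N) {D : ℝ} (hD : 0 < D) (hDL : D ≤ L) : 0 < kD κ N D :=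
  intervalIntegral.intervalIntegral_pos_of_pos_on ((continuous_sK_rpow hN).intervalIntegrable _ _)
    (fun t ht => Real.rpow_pos_of_pos (hpos t ⟨ht.1, ht.2.le.trans hDL⟩) _) hD

lemma leftIntegral_pos (hN : 1 ≤ N) {D a : ℝ} (ha : 0 < a) (haD : a < D) (hDL : D ≤ L) :
    0 < leftIntegral κ N D a :=
  intervalIntegral.intervalIntegral_pos_of_pos_on
    ((continuous_leftIntegrand hN D a).intervalIntegrable _ _)
    (fun y hy => Real.rpow_pos_of_pos (div_pos (hpos _ ⟨by linarith [hy.2], by linarith [hy.1]⟩)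
      (hpos _ ⟨by linarith, by linarith⟩)) _) ha

lemma fKND_eq (hN : 1 ≤ N) {D a : ℝ} (ha : 0 < a) (haD : a ≤ D) (hDL : D ≤ L) :
    fKND κ N D a = (leftIntegral κ N D a + (kD κ N D - kD κ N a) / sK κ a ^ (N - 1))⁻¹ := by
  have hi : ∀ u v : ℝ, IntervalIntegrable (fun t => sK κ t ^ (N - 1)) volume u v :=
    fun _ _ => (continuous_sK_rpow hN).intervalIntegrable _ _
  rw [fKND, leftIntegral, kD, kD, intervalIntegral.integral_interval_sub_left (hi 0 D) (hi 0 a),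
    ← intervalIntegral.integral_div]
  congr 2
  refine intervalIntegral.integral_congr fun y hy => ?_
  rw [uIcc_of_le haD] at hy
  exact Real.div_rpow (hpos y ⟨ha.trans_le hy.1, hy.2.trans hDL⟩).le
    (hpos a ⟨ha, haD.trans hDL⟩).le _

lemma isoperimetric_ratio_eq (hN : 1 ≤ N) {D a : ℝ} (ha : 0 < a) (haD : a < D) (hDL : D ≤ L) :
    fKND κ N D a * kD κ N D ^ (1 / N) / vKND κ N D a ^ ((N - 1) / N) =
      ((leftIntegral κ N D a ^ N / kD κ N D +
        (leftIntegral κ N D a / sK κ a) ^ (N - 1) * (1 - kD κ N a / kD κ N D))⁻¹) ^ (1 / N) := by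
  set A := leftIntegral κ N D a
  have hA : 0 < A := leftIntegral_pos hpos hN ha haD hDL
  have hs : 0 < sK κ a := hpos a ⟨ha, by linarith⟩
  have hk : 0 < kD κ N D := kD_pos hpos hN (by linarith) hDL
  have hka : kD κ N a ≤ kD κ N D := kD_mono hpos hN ha.le haD.le hDL
  have hB : 0 ≤ (kD κ N D - kD κ N a) / sK κ a ^ (N - 1) :=
    div_nonneg (by linarith) (by positivity)
  rw [vKND_eq ha.le, fKND_eq hpos hN ha haD.le hDL,
    inv_mul_rpow_div_inv_mul_rpow hA hB hk.le (by linarith)]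
  congr 1
  have hAN : A ^ N = A ^ (N - 1) * A := by
    rw [← Real.rpow_add_one hA.ne', sub_add_cancel]
  rw [hAN, Real.div_rpow hA.le hs.le]
  have : 0 < A ^ (N - 1) := by positivity
  have : 0 < sK κ a ^ (N - 1) := by positivity
  field_simp

lemma eventually_forall_abs_leftIntegrand_sub_one_le {l ε : ℝ} (hl : 0 < l) (hε : 0 < ε) :
    ∀ᶠ p : ℝ × ℝ in 𝓝[>] 0 ×ˢ 𝓟 (Icc l L), ∀ y ∈ Icc 0 p.1,
      |(sK κ (p.2 - y) / sK κ (p.2 - p.1)) ^ (N - 1) - 1| ≤ ε := by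
  have hsK : ∀ t ∈ Icc (l / 2) L, 0 < sK κ t := fun t ht => hpos t ⟨by linarith [ht.1], ht.2⟩
  have hφ : ContinuousOn (fun q : ℝ × ℝ => (sK κ q.1 / sK κ q.2) ^ (N - 1))
      (Icc (l / 2) L ×ˢ Icc (l / 2) L) := by
    refine ContinuousOn.rpow_const ?_ fun q hq => Or.inl (div_pos (hsK _ hq.1) (hsK _ hq.2)).ne'
    exact ((continuous_sK κ).comp continuous_fst).continuousOn.div
      ((continuous_sK κ).comp continuous_snd).continuousOn fun q hq => (hsK _ hq.2).ne'
  obtain ⟨δ, hδ, hφδ⟩ := Metric.uniformContinuousOn_iff.1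
    ((isCompact_Icc.prod isCompact_Icc).uniformContinuousOn_of_continuous hφ) ε hε
  have hsmall : ∀ᶠ a in 𝓝[>] (0:ℝ), a < min δ (l / 2) :=
    nhdsWithin_le_nhds (eventually_lt_nhds (lt_min hδ (half_pos hl)))
  filter_upwards [hsmall.prod_inl _, (eventually_principal.2 fun _ h => h).prod_inr _]
    with ⟨a, D⟩ ha hD y hy
  obtain ⟨haδ, hal⟩ := lt_min_iff.1 ha
  have hu : D - y ∈ Icc (l / 2) L := ⟨by linarith [hD.1, hy.2], by linarith [hD.2, hy.1]⟩
  have hw : D - a ∈ Icc (l / 2) L := ⟨by linarith [hD.1], by linarith [hD.2, hy.1, hy.2]⟩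
  have hdist : dist (D - y, D - a) (D - a, D - a) < δ := by
    rw [Prod.dist_eq, dist_self, Real.dist_eq, sub_sub_sub_cancel_left, max_lt_iff, abs_sub_lt_iff]
    exact ⟨⟨by linarith [hy.1], by linarith [hy.2]⟩, hδ⟩
  have h := hφδ _ ⟨hu, hw⟩ _ ⟨hw, hw⟩ hdist
  rw [div_self (hsK _ hw).ne', Real.one_rpow, Real.dist_eq] at h
  exact h.le

lemma tendsto_leftIntegral_div_self (hN : 1 ≤ N) {l : ℝ} (hl : 0 < l) :
    Tendsto (fun p : ℝ × ℝ => leftIntegral κ N p.2 p.1 / p.1) (𝓝[>] 0 ×ˢ 𝓟 (Icc l L)) (𝓝 1) :=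
  tendsto_integral_div_of_forall_abs_sub_le (eventually_mem_nhdsWithin.prod_inl _)
    (Eventually.of_forall fun p => (continuous_leftIntegrand hN p.2 p.1).intervalIntegrable _ _)
    fun _ hε => eventually_forall_abs_leftIntegrand_sub_one_le hpos hl hε

/-- Uniformity in `D ∈ [l, L]` is expressed by taking the limit along `𝓝[>] 0 ×ˢ 𝓟 (Icc l L)`. -/
theorem tendsto_isoperimetric_ratio (hN : 1 ≤ N) {l : ℝ} (hl : 0 < l) :
    Tendsto (fun p : ℝ × ℝ =>
        fKND κ N p.2 p.1 * kD κ N p.2 ^ (1 / N) / vKND κ N p.2 p.1 ^ ((N - 1) / N))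
      (𝓝[>] 0 ×ˢ 𝓟 (Icc l L)) (𝓝 1) := by
  rcases lt_or_ge L l with hLl | hlL
  · simp [Icc_eq_empty_of_lt hLl]
  set F := 𝓝[>] (0:ℝ) ×ˢ 𝓟 (Icc l L)
  have hsmall : ∀ᶠ a in 𝓝[>] (0:ℝ), a ∈ Ioo 0 l := Ioo_mem_nhdsGT hl
  have hdom : ∀ᶠ p in F, p.1 ∈ Ioo 0 l ∧ p.2 ∈ Icc l L :=
    (hsmall.prod_inl _).and ((eventually_principal.2 fun _ h => h).prod_inr _)
  have hk : ∀ᶠ p in F, kD κ N l ≤ kD κ N p.2 := by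
    filter_upwards [hdom] with p ⟨_, hD⟩ using kD_mono hpos hN hl.le hD.1 hD.2
  have hk₀ : 0 < kD κ N l := kD_pos hpos hN hl hlL
  have ha : Tendsto (fun p : ℝ × ℝ => p.1) F (𝓝 0) := tendsto_fst.mono_right nhdsWithin_le_nhds
  have hA_div := tendsto_leftIntegral_div_self hpos hN hl
  have hA : Tendsto (fun p : ℝ × ℝ => leftIntegral κ N p.2 p.1) F (𝓝 0) := by
    have h := hA_div.mul ha
    rw [one_mul] at h
    refine h.congr' ?_
    filter_upwards [hdom] with p ⟨hp, _⟩ using div_mul_cancel₀ _ hp.1.ne'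
  have hs : Tendsto (fun p : ℝ × ℝ => sK κ p.1 / p.1) F (𝓝 1) :=
    (tendsto_sK_div_self κ).comp tendsto_fst
  have hka : Tendsto (fun p : ℝ × ℝ => kD κ N p.1) F (𝓝 0) := by
    have h := ((continuous_kD (κ := κ) hN).tendsto 0).comp ha
    rwa [kD, intervalIntegral.integral_same] at h
  have hAN : Tendsto (fun p : ℝ × ℝ => leftIntegral κ N p.2 p.1 ^ N) F (𝓝 0) := by
    simpa [Real.zero_rpow (by linarith : N ≠ 0)] using hA.rpow_const (p := N) (Or.inr (by linarith))
  have hS := (hAN.div_of_eventually_ge hk₀ hk).add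
    (((hA_div.div hs one_ne_zero).rpow_const (p := N - 1) (Or.inr (by linarith))).mul
      ((tendsto_const_nhds (x := (1:ℝ))).sub (hka.div_of_eventually_ge hk₀ hk)))
  have hQ := (hS.inv₀ (by simp)).rpow_const (p := 1 / N) (Or.inr (by positivity))
  simp only [div_one, Real.one_rpow, sub_zero, mul_one, zero_add, inv_one] at hQ
  refine hQ.congr' ?_
  filter_upwards [hdom] with p ⟨ha, hD⟩
  rw [Pi.div_apply, div_div_div_cancel_right₀ ha.1.ne']
  exact (isoperimetric_ratio_eq hpos hN ha.1 (ha.2.trans_le hD.1) hD.2).symm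

lemma exists_pos_le_vKND (hN : 1 ≤ N) {l δ : ℝ} (hl : 0 < l) (hδ : 0 < δ) :
    ∃ v₀ > 0, ∀ D ∈ Icc l L, ∀ a ∈ Ioo 0 D, δ ≤ a → v₀ ≤ vKND κ N D a := by
  rcases lt_or_ge L l with hLl | hlL
  · exact ⟨1, one_pos, by simp [Icc_eq_empty_of_lt hLl]⟩
  set d := min δ (l / 2)
  have hd : 0 < d := lt_min hδ (half_pos hl)
  obtain ⟨m, hm, hm_le⟩ := isCompact_Icc.exists_forall_le' (continuous_sK κ).continuousOn
    fun t (ht : t ∈ Icc (l / 2) L) => hpos t ⟨by linarith [ht.1], ht.2⟩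
  obtain ⟨m', hm', hm'_le⟩ := isCompact_Icc.exists_forall_le' (continuous_sK κ).continuousOn
    fun t (ht : t ∈ Icc δ L) => hpos t ⟨hδ.trans_le ht.1, ht.2⟩
  obtain ⟨C, hC⟩ := (isCompact_Icc (a := 0) (b := L)).bddAbove_image
    (continuous_sK κ).continuousOn
  set M := max C 1
  set Alo := d * (m / M) ^ (N - 1)
  set Bhi := kD κ N L / m' ^ (N - 1)
  have hkL : 0 ≤ kD κ N L := (kD_pos hpos hN hl hlL).le.trans (kD_mono hpos hN hl.le hlL le_rfl)
  refine ⟨Alo / (Alo + Bhi), by positivity, fun D hD a ha hδa => ?_⟩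
  have hA : Alo ≤ leftIntegral κ N D a := by
    have hint := (continuous_leftIntegrand (κ := κ) hN D a).intervalIntegrable (μ := volume)
    calc Alo = ∫ _ in (0:ℝ)..d, (m / M) ^ (N - 1) := by simp [Alo]
      _ ≤ ∫ y in (0:ℝ)..d, (sK κ (D - y) / sK κ (D - a)) ^ (N - 1) := by
        refine intervalIntegral.integral_mono_on hd.le intervalIntegrable_const (hint _ _)
          fun y hy => Real.rpow_le_rpow (by positivity) ?_ (by linarith)
        have hyd : y ≤ l / 2 := hy.2.trans (min_le_right _ _)
        have hmy := hm_le (D - y) ⟨by linarith [hD.1], by linarith [hD.2, hy.1]⟩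
        refine div_le_div₀ (hm.trans_le hmy).le hmy
          (hpos _ ⟨by linarith [ha.2], by linarith [ha.1, hD.2]⟩) ?_
        exact (hC (mem_image_of_mem _ ⟨by linarith [ha.2], by linarith [ha.1, hD.2]⟩)).trans
          (le_max_left _ _)
      _ ≤ leftIntegral κ N D a := by
        refine intervalIntegral.integral_mono_interval le_rfl hd.le
          ((min_le_left _ _).trans hδa) ?_ (hint _ _)
        refine (ae_restrict_iff' measurableSet_Ioc).2 (Eventually.of_forall fun y hy => ?_)
        exact Real.rpow_nonneg (div_nonneg
          (hpos _ ⟨by linarith [hy.2, ha.2], by linarith [hy.1, hD.2]⟩).le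
          (hpos _ ⟨by linarith [ha.2], by linarith [ha.1, hD.2]⟩).le) _
  have hka : kD κ N a ≤ kD κ N D := kD_mono hpos hN ha.1.le ha.2.le hD.2
  have hB₀ : 0 ≤ (kD κ N D - kD κ N a) / sK κ a ^ (N - 1) :=
    div_nonneg (by linarith) (Real.rpow_nonneg (hpos a ⟨ha.1, by linarith [ha.2, hD.2]⟩).le _)
  have hB : (kD κ N D - kD κ N a) / sK κ a ^ (N - 1) ≤ Bhi := by
    have hka₀ : 0 ≤ kD κ N a :=
      (kD_pos hpos hN ha.1 (by linarith [ha.2, hD.2])).le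
    refine div_le_div₀ hkL ?_ (by positivity)
      (Real.rpow_le_rpow hm'.le (hm'_le a ⟨hδa, by linarith [ha.2, hD.2]⟩) (by linarith))
    linarith [kD_mono hpos hN (hl.le.trans hD.1) hD.2 le_rfl]
  have hAlo : 0 < Alo := by positivity
  rw [vKND_eq ha.1.le, fKND_eq hpos hN ha.1 ha.2.le hD.2, inv_mul_eq_div,
    div_le_div_iff₀ (by positivity) (by linarith)]
  nlinarith [mul_le_mul hA hB hB₀ (hAlo.le.trans hA)]

end Model

/-- `Ĩ_{K,N,D}(v) = f_{K,N,D}(a_{K,N,D}(v)) = k_D^(-1/N) v^((N-1)/N) (1+o(1))`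
as `v → 0⁺`, uniformly in `D ∈ [λL, L]`. -/
theorem stmt4 (N κ lam L : ℝ) (hN : 1 < N) (hκ : κ = -1 ∨ κ = 0 ∨ κ = 1)
    (hlam : lam ∈ Set.Ioc (0:ℝ) 1) (hL : 0 < L) (hLpi : κ = 1 → L < Real.pi) :
    ∀ ε > 0, ∃ vbar > 0, ∀ D ∈ Set.Icc (lam * L) L, ∀ a ∈ Set.Ioo (0:ℝ) D,
      vKND κ N D a < vbar →
      |fKND κ N D a * kD κ N D ^ (1 / N) / vKND κ N D a ^ ((N - 1) / N) - 1| ≤ ε := by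
  have hl : 0 < lam * L := mul_pos hlam.1 hL
  have hpos : ∀ t ∈ Ioc 0 L, 0 < sK κ t := fun t ht => sK_pos ht.1 fun hκ₀ => by
    rcases hκ with rfl | rfl | rfl
    · norm_num at hκ₀
    · exact absurd hκ₀ (lt_irrefl 0)
    · simpa using ht.2.trans_lt (hLpi rfl)
  intro ε hε
  obtain ⟨δ, hδ, hsmall⟩ := mem_nhdsGT_iff_exists_Ioo_subset.1 (mem_prod_principal.1
    (Metric.tendsto_nhds.1 (tendsto_isoperimetric_ratio hpos hN.le hl) ε hε))
  obtain ⟨vbar, hvbar, hv⟩ := exists_pos_le_vKND hpos hN.le hl hδ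
  refine ⟨vbar, hvbar, fun D hD a ha hva => ?_⟩
  have haδ : a < δ := by
    by_contra! h
    exact (hv D hD a ha h).not_gt hva
  exact (hsmall ⟨ha.1, haδ⟩ D hD).le
end
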